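/- arXiv:math/0310265 — 2 statements merged into one kernel-verified Lean document; each statement's English description precedes it below -/
import Mathlib

section
/- If g ∈ N satisfies E_{Z(N)}(g) = 1 and f = (1^o ⊗ g)·e in N^o ⊗ N, then f is a separating element of N: f(a^o ⊗ 1) = f(1 ⊗ a) for every a ∈ N and m(f) = 1. -/
/- Context: `N = ⨁_{γ ∈ Γ} M_{n γ}(ℂ)`, with matrix units `matUnit n γ i j`,
`N^o ⊗ N` the algebraic tensor product of the opposite algebra with `N`,
`mulMap` the multiplication map `m(a^o ⊗ b) = a * b`, `sepE` the symmetric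
separating element `e = Σ_γ Σ_{i,j} (1/n_γ) (e^γ_{i,j})^o ⊗ e^γ_{j,i}`, and
`EZ` the canonical conditional expectation onto the center of `N`. -/

open scoped TensorProduct
open MulOpposite

/-- The algebra `N = ⨁_{γ ∈ Γ} M_{n γ}(ℂ)`. -/
abbrev NAlg {Γ : Type*} [Fintype Γ] (n : Γ → ℕ) : Type _ :=
  ∀ γ : Γ, Matrix (Fin (n γ)) (Fin (n γ)) ℂ

/-- The matrix units `e^γ_{i,j}` of `N`. -/
noncomputable def matUnit {Γ : Type*} [Fintype Γ] [DecidableEq Γ] (n : Γ → ℕ)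
    (γ : Γ) (i j : Fin (n γ)) : NAlg n :=
  Pi.single γ (Matrix.single i j 1)

/-- The multiplication map `m : N^o ⊗ N → N`, `m(a^o ⊗ b) = ab`. -/
noncomputable def mulMap {Γ : Type*} [Fintype Γ] (n : Γ → ℕ) :
    ((NAlg n)ᵐᵒᵖ ⊗[ℂ] NAlg n) →ₗ[ℂ] NAlg n :=
  (LinearMap.mul' ℂ (NAlg n)).comp
    (TensorProduct.map (opLinearEquiv ℂ).symm.toLinearMap LinearMap.id)

/-- The symmetric separating element `e = Σ_γ Σ_{i,j} (1/n_γ) (e^γ_{i,j})^o ⊗ e^γ_{j,i}`. -/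
noncomputable def sepE {Γ : Type*} [Fintype Γ] [DecidableEq Γ] (n : Γ → ℕ) :
    (NAlg n)ᵐᵒᵖ ⊗[ℂ] NAlg n :=
  ∑ γ : Γ, ∑ i : Fin (n γ), ∑ j : Fin (n γ),
    (n γ : ℂ)⁻¹ • (op (matUnit n γ i j) ⊗ₜ[ℂ] matUnit n γ j i)

/-- `f ∈ N^o ⊗ N` is a separating element of `N` if `f(a^o ⊗ 1) = f(1 ⊗ a)` for all
`a ∈ N` and `m(f) = 1`. -/
def IsSepElt {Γ : Type*} [Fintype Γ] (n : Γ → ℕ) (f : (NAlg n)ᵐᵒᵖ ⊗[ℂ] NAlg n) : Prop :=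
  (∀ a : NAlg n, f * (op a ⊗ₜ[ℂ] (1 : NAlg n)) = f * ((1 : (NAlg n)ᵐᵒᵖ) ⊗ₜ[ℂ] a)) ∧
    mulMap n f = 1

/-- The canonical conditional expectation `E_{Z(N)} : N → Z(N)`,
`E_{Z(N)}(x) = Σ_γ Σ_{i,j} (1/n_γ) e^γ_{i,j} x e^γ_{j,i}`. -/
noncomputable def EZ {Γ : Type*} [Fintype Γ] [DecidableEq Γ] (n : Γ → ℕ)
    (x : NAlg n) : NAlg n :=
  ∑ γ : Γ, ∑ i : Fin (n γ), ∑ j : Fin (n γ),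
    (n γ : ℂ)⁻¹ • (matUnit n γ i j * x * matUnit n γ j i)

/-! The identity `e (a^o ⊗ 1) = e (1 ⊗ a)` is linear in `a`, so it suffices to check it on matrix
units, where both sides equal `Σ_j (1/n_δ) (e^δ_{k,j})^o ⊗ e^δ_{j,l}`. Left multiplication by
`1^o ⊗ g` preserves it, and `m((1^o ⊗ g) e) = Σ (1/n_γ) e^γ_{i,j} g e^γ_{j,i} = E_{Z(N)}(g)`. -/

section

variable {Γ : Type*} [Fintype Γ] (n : Γ → ℕ)

theorem mulMap_tmul (a b : NAlg n) : mulMap n (op a ⊗ₜ[ℂ] b) = a * b := by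
  simp [mulMap]

variable [DecidableEq Γ]

theorem NAlg.linearMap_ext {M : Type*} [AddCommMonoid M] [Module ℂ M] {L₁ L₂ : NAlg n →ₗ[ℂ] M}
    (h : ∀ γ i j, L₁ (matUnit n γ i j) = L₂ (matUnit n γ i j)) : L₁ = L₂ :=
  LinearMap.pi_ext' fun γ => Matrix.ext_linearMap (R := ℂ) fun i j => LinearMap.ext_ring (h γ i j)

theorem matUnit_mul_matUnit (γ : Γ) (i j k l : Fin (n γ)) :
    matUnit n γ i j * matUnit n γ k l = if j = k then matUnit n γ i l else 0 := by
  by_cases hjk : j = k <;> simp [matUnit, ← Pi.single_mul, hjk]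

theorem matUnit_mul_matUnit_of_ne {γ δ : Γ} (h : γ ≠ δ) (i j : Fin (n γ)) (k l : Fin (n δ)) :
    matUnit n γ i j * matUnit n δ k l = 0 := by
  funext ε
  rcases eq_or_ne ε γ with rfl | hε
  · simp [matUnit, Pi.single_eq_of_ne h]
  · simp [matUnit, Pi.single_eq_of_ne hε]

theorem sepE_mul_op_matUnit_tmul_one (δ : Γ) (k l : Fin (n δ)) :
    sepE n * (op (matUnit n δ k l) ⊗ₜ[ℂ] (1 : NAlg n)) =
      sepE n * ((1 : (NAlg n)ᵐᵒᵖ) ⊗ₜ[ℂ] matUnit n δ k l) := by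
  simp only [sepE, Finset.sum_mul]
  refine Finset.sum_congr rfl fun γ _ => ?_
  rcases eq_or_ne γ δ with rfl | h
  · rw [Finset.sum_comm]
    conv_rhs => rw [Finset.sum_comm]
    refine Finset.sum_congr rfl fun j _ => ?_
    simp only [smul_mul_assoc, Algebra.TensorProduct.tmul_mul_tmul, ← op_mul, mul_one,
      matUnit_mul_matUnit, apply_ite op, op_zero, TensorProduct.ite_tmul, TensorProduct.tmul_ite,
      smul_ite, smul_zero, Finset.sum_ite_eq, Finset.sum_ite_eq', Finset.mem_univ, if_true]
  · simp [smul_mul_assoc, Algebra.TensorProduct.tmul_mul_tmul, ← op_mul,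
      matUnit_mul_matUnit_of_ne n h, matUnit_mul_matUnit_of_ne n h.symm]

theorem sepE_mul_op_tmul_one (a : NAlg n) :
    sepE n * (op a ⊗ₜ[ℂ] (1 : NAlg n)) = sepE n * ((1 : (NAlg n)ᵐᵒᵖ) ⊗ₜ[ℂ] a) := by
  have h : LinearMap.mulLeft ℂ (sepE n) ∘ₗ (TensorProduct.mk ℂ _ _).flip 1 ∘ₗ
        (opLinearEquiv ℂ).toLinearMap =
      LinearMap.mulLeft ℂ (sepE n) ∘ₗ TensorProduct.mk ℂ _ _ 1 :=
    NAlg.linearMap_ext n fun δ k l => sepE_mul_op_matUnit_tmul_one n δ k l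
  exact LinearMap.congr_fun h a

theorem mulMap_op_one_tmul_mul_sepE (g : NAlg n) :
    mulMap n ((op (1 : NAlg n) ⊗ₜ[ℂ] g) * sepE n) = EZ n g := by
  simp only [sepE, EZ, Finset.mul_sum, map_sum, mul_smul_comm, map_smul,
    Algebra.TensorProduct.tmul_mul_tmul, op_one, one_mul, mulMap_tmul, mul_assoc]

end

theorem isSep_of_g_general {Γ : Type*} [Fintype Γ] [DecidableEq Γ]
    (n : Γ → ℕ) (g : NAlg n) (hg : EZ n g = 1)
    (f : (NAlg n)ᵐᵒᵖ ⊗[ℂ] NAlg n) (hf : f = (op (1 : NAlg n) ⊗ₜ[ℂ] g) * sepE n) :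
    IsSepElt n f := by
  subst hf
  refine ⟨fun a => ?_, ?_⟩
  · rw [mul_assoc, mul_assoc, sepE_mul_op_tmul_one]
  · rw [mulMap_op_one_tmul_mul_sepE, hg]

/-- If `E_{Z(N)}(g) = 1` and `f = (1 ⊗ g)·e`, then `f` is a separating element of `N`. -/
theorem isSep_of_g {Γ : Type*} [Fintype Γ] [DecidableEq Γ] [Nonempty Γ]
    (n : Γ → ℕ) (hn : ∀ γ, 1 ≤ n γ) (g : NAlg n) (hg : EZ n g = 1)
    (f : (NAlg n)ᵐᵒᵖ ⊗[ℂ] NAlg n) (hf : f = (op (1 : NAlg n) ⊗ₜ[ℂ] g) * sepE n) :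
    IsSepElt n f :=
  isSep_of_g_general n g hg f hf
end

section
/- Let q be the unique invertible element of A_t with Δ(1) = Σ_γ Σ_{i,j} (1/n_γ) κ⁻¹(e^γ_{i,j} q) ⊗ e^γ_{j,i}. Then κ²(q) = q, E_{Z(A_t)}(q) = 1, and q is a positive element of A. -/
/- Context: a finite-dimensional C*-quantum groupoid (weak Hopf C*-algebra)
`(A, Δ, κ, ε)`, together with a fixed system of matrix units `e γ i j`
(`γ ∈ Γ` finite, `1 ≤ i,j ≤ n γ`) spanning the target Cartan subalgebra `A_t`.
The componentwise involution of `A ⊗[ℂ] A` is encoded by the field `starT`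
(uniquely determined by `starT_add` and `starT_tmul`). -/

open scoped TensorProduct ComplexOrder

/-- A finite-dimensional C*-quantum groupoid (weak Hopf C*-algebra) with a chosen
system of matrix units for its target Cartan subalgebra. -/
structure WeakHopfCStar (A : Type*) (Γ : Type*) [Fintype Γ] [DecidableEq Γ]
    [NormedRing A] [StarRing A] [CStarRing A] [NormedAlgebra ℂ A] [StarModule ℂ A]
    [FiniteDimensional ℂ A] (n : Γ → ℕ) where
  /-- the coproduct -/
  Δ : A →ₗ[ℂ] A ⊗[ℂ] A
  /-- the antipode -/
  κ : A →ₗ[ℂ] A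
  /-- the counit -/
  ε : A →ₗ[ℂ] ℂ
  /-- the componentwise involution of `A ⊗ A` -/
  starT : A ⊗[ℂ] A → A ⊗[ℂ] A
  starT_add : ∀ x y : A ⊗[ℂ] A, starT (x + y) = starT x + starT y
  starT_tmul : ∀ a b : A, starT (a ⊗ₜ[ℂ] b) = star a ⊗ₜ[ℂ] star b
  Δ_mul : ∀ a b : A, Δ (a * b) = Δ a * Δ b
  Δ_star : ∀ a : A, Δ (star a) = starT (Δ a)
  coassoc : ∀ a : A,
    (TensorProduct.assoc ℂ A A A) ((TensorProduct.map Δ LinearMap.id) (Δ a)) =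
      (TensorProduct.map LinearMap.id Δ) (Δ a)
  κ_antimul : ∀ x y : A, κ (x * y) = κ y * κ x
  κ_star_sq : ∀ a : A, κ (star (κ (star a))) = a
  κ_flip : ∀ a : A,
    (TensorProduct.map κ κ) (Δ a) = (TensorProduct.comm ℂ A A) (Δ (κ a))
  antipode : ∀ x : A,
    (TensorProduct.map ((LinearMap.mul' ℂ A).comp (TensorProduct.map κ LinearMap.id))
        LinearMap.id) ((TensorProduct.map Δ LinearMap.id) (Δ x)) =
      ((1 : A) ⊗ₜ[ℂ] x) * Δ 1
  ε_pos : ∀ a : A, 0 ≤ ε (star a * a)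
  ε_counit_l : ∀ a : A,
    (TensorProduct.lid ℂ A) ((TensorProduct.map ε LinearMap.id) (Δ a)) = a
  ε_counit_r : ∀ a : A,
    (TensorProduct.rid ℂ A) ((TensorProduct.map LinearMap.id ε) (Δ a)) = a
  ε_weak : ∀ x y : A,
    (LinearMap.mul' ℂ ℂ)
        ((TensorProduct.map ε ε) ((x ⊗ₜ[ℂ] (1 : A)) * Δ 1 * ((1 : A) ⊗ₜ[ℂ] y))) =
      ε (x * y)
  n_pos : ∀ γ : Γ, 1 ≤ n γ
  /-- the matrix units of the target Cartan subalgebra `A_t` -/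
  e : (γ : Γ) → Fin (n γ) → Fin (n γ) → A
  e_target : ∀ (γ : Γ) (i j : Fin (n γ)),
    Δ (e γ i j) = Δ 1 * (e γ i j ⊗ₜ[ℂ] (1 : A)) ∧
      Δ (e γ i j) = (e γ i j ⊗ₜ[ℂ] (1 : A)) * Δ 1
  e_mul_same : ∀ (γ : Γ) (i j k l : Fin (n γ)),
    e γ i j * e γ k l = if j = k then e γ i l else 0
  e_mul_ne : ∀ (γ δ : Γ), γ ≠ δ → ∀ (i j : Fin (n γ)) (k l : Fin (n δ)),
    e γ i j * e δ k l = 0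
  e_star : ∀ (γ : Γ) (i j : Fin (n γ)), star (e γ i j) = e γ j i
  e_sum : ∑ γ : Γ, ∑ i : Fin (n γ), e γ i i = 1
  e_span : ∀ x : A,
    (Δ x = Δ 1 * (x ⊗ₜ[ℂ] (1 : A)) ∧ Δ x = (x ⊗ₜ[ℂ] (1 : A)) * Δ 1) →
      x ∈ Submodule.span ℂ
        (Set.range fun p : Σ γ : Γ, Fin (n γ) × Fin (n γ) => e p.1 p.2.1 p.2.2)

namespace WeakHopfCStar

variable {A Γ : Type*} [Fintype Γ] [DecidableEq Γ]
  [NormedRing A] [StarRing A] [CStarRing A] [NormedAlgebra ℂ A] [StarModule ℂ A]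
  [FiniteDimensional ℂ A] {n : Γ → ℕ}

/-- The target Cartan subalgebra `A_t`. -/
def tgt (W : WeakHopfCStar A Γ n) : Set A :=
  {x | W.Δ x = W.Δ 1 * (x ⊗ₜ[ℂ] (1 : A)) ∧ W.Δ x = (x ⊗ₜ[ℂ] (1 : A)) * W.Δ 1}

/-- The source Cartan subalgebra `A_s`. -/
def src (W : WeakHopfCStar A Γ n) : Set A :=
  {x | W.Δ x = W.Δ 1 * ((1 : A) ⊗ₜ[ℂ] x) ∧ W.Δ x = ((1 : A) ⊗ₜ[ℂ] x) * W.Δ 1}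

/-- The inverse of the antipode, `κ⁻¹ = * ∘ κ ∘ *`. -/
noncomputable def κinv (W : WeakHopfCStar A Γ n) (a : A) : A := star (W.κ (star a))

/-- The canonical conditional expectation `E_{Z(A_t)}` of `A_t` onto its center. -/
noncomputable def EZt (W : WeakHopfCStar A Γ n) (x : A) : A :=
  ∑ γ : Γ, ∑ i : Fin (n γ), ∑ j : Fin (n γ),
    (n γ : ℂ)⁻¹ • (W.e γ i j * x * W.e γ j i)

/-- The defining property of the canonical element `q ∈ A_t`:
`Δ(1) = Σ_γ Σ_{i,j} (1/n_γ) κ⁻¹(e^γ_{i,j} q) ⊗ e^γ_{j,i}`. -/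
noncomputable def qFormula (W : WeakHopfCStar A Γ n) (q : A) : Prop :=
  W.Δ 1 = ∑ γ : Γ, ∑ i : Fin (n γ), ∑ j : Fin (n γ),
    (n γ : ℂ)⁻¹ • (W.κinv (W.e γ i j * q) ⊗ₜ[ℂ] W.e γ j i)

end WeakHopfCStar

namespace WeakHopfCStar

variable {A Γ : Type*} [Fintype Γ] [DecidableEq Γ]
  [NormedRing A] [StarRing A] [CStarRing A] [NormedAlgebra ℂ A] [StarModule ℂ A]
  [FiniteDimensional ℂ A] {n : Γ → ℕ}

/-- The deformed coproduct `Δ_k(a) = Δ(a)(1 ⊗ k⁻¹)`. -/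
noncomputable def Δk (W : WeakHopfCStar A Γ n) (k : A) : A →ₗ[ℂ] A ⊗[ℂ] A :=
  (LinearMap.mulRight ℂ ((1 : A) ⊗ₜ[ℂ] Ring.inverse k)).comp W.Δ

/-- The deformed antipode `κ_k(a) = k κ(a) k⁻¹`. -/
noncomputable def κk (W : WeakHopfCStar A Γ n) (k : A) : A →ₗ[ℂ] A :=
  (LinearMap.mulLeft ℂ k).comp ((LinearMap.mulRight ℂ (Ring.inverse k)).comp W.κ)

/-- The deformed counit `ε_k(a) = ε(a k)`. -/
noncomputable def εk (W : WeakHopfCStar A Γ n) (k : A) : A →ₗ[ℂ] ℂ :=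
  W.ε.comp (LinearMap.mulRight ℂ k)

end WeakHopfCStar

/-!
Write `q = Σ Q^γ_{ij} e^γ_{ij}`. Applying `(ε ∘ κ) ⊗ id` to `Δ(1)` (via `(κ ⊗ κ)Δ = ς Δ κ` and the
counit) gives `Σ (1/n_γ) ε(e^γ_{ij} q) e^γ_{ji} = 1`, i.e. `Q^γ N^γ = n_γ` for the matrix
`N^γ_{ij} = ε(e^γ_{ji})`, which is positive semidefinite because `ε` is positive. Hence every
`Q^γ = n_γ (N^γ)⁻¹` is positive semidefinite, `Q^γ = B^γ* B^γ`, and `q = b* b` for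
`b = Σ B^γ_{ij} e^γ_{ij}`. The second legs `e^γ_{ji}` of `Δ(1)` lie in `A_t`, so the antipode axiom
at `1` yields `m(κ ⊗ id)Δ(1) = 1`, which is `E_{Z(A_t)}(q) = 1`. Finally `Δ(1)* = Δ(1)`, compared
coefficientwise, says that `κ⁻¹(e^γ_{ii} q)` is self-adjoint, i.e. `κ²(q e^γ_{ii}) = e^γ_{ii} q`
since `q = q*`; summing over the diagonal units gives `κ²(q) = q`.
-/

theorem Matrix.PosSemidef.of_mul_eq_smul_one {m : Type*} [Fintype m] [DecidableEq m]
    {N Q : Matrix m m ℂ} (hN : N.PosSemidef) {c : ℂ} (hc : 0 < c) (h : Q * N = c • 1) :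
    Q.PosSemidef := by
  have hinv : N * (c⁻¹ • Q) = 1 :=
    mul_eq_one_comm.mp (by rw [Matrix.smul_mul, h, smul_smul, inv_mul_cancel₀ hc.ne', one_smul])
  have hQ : Q = c • N⁻¹ := by
    rw [Matrix.inv_eq_right_inv hinv, smul_smul, mul_inv_cancel₀ hc.ne', one_smul]
  exact hQ ▸ hN.inv.smul hc.le

namespace WeakHopfCStar

open TensorProduct
open scoped Matrix

variable {A Γ : Type*} [Fintype Γ] [DecidableEq Γ]
  [NormedRing A] [StarRing A] [CStarRing A] [NormedAlgebra ℂ A] [StarModule ℂ A]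
  [FiniteDimensional ℂ A] {n : Γ → ℕ} (W : WeakHopfCStar A Γ n)

lemma κ_κinv (a : A) : W.κ (W.κinv a) = a := W.κ_star_sq a

lemma κinv_κ (a : A) : W.κinv (W.κ a) = a := by
  simpa [κinv] using congrArg star (W.κ_star_sq (star a))

lemma κ_injective : Function.Injective W.κ := Function.LeftInverse.injective W.κinv_κ

lemma star_κinv (a : A) : star (W.κinv a) = W.κ (star a) := star_star _

lemma ε_star (a : A) : W.ε (star a) = starRingEnd ℂ (W.ε a) := by
  have him : ∀ x : A, (W.ε (star x * x)).im = 0 := fun x =>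
    (Complex.nonneg_iff.mp (W.ε_pos x)).2.symm
  have h₀ : (W.ε 1).im = 0 := by simpa using him 1
  have h₁ := him (a + 1)
  have h₂ := him (a + Complex.I • 1)
  simp only [star_add, star_one, mul_add, add_mul, one_mul, mul_one, map_add, Complex.add_im,
    star_smul, RCLike.star_def, Complex.conj_I, neg_smul, neg_mul, smul_mul_assoc,
    mul_smul_comm, smul_add, smul_neg, map_neg, map_smul, smul_eq_mul, Complex.neg_im,
    Complex.mul_im, Complex.I_re, zero_mul, Complex.I_im, zero_add, Complex.mul_re, zero_sub,
    mul_neg, neg_neg, him] at h₁ h₂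
  apply Complex.ext
  · rw [Complex.conj_re]; linarith
  · rw [Complex.conj_im]; linarith

lemma starT_eq_star : W.starT = star := by
  ext t
  induction t using TensorProduct.induction_on with
  | zero => simpa using W.starT_add 0 0
  | tmul a b => exact W.starT_tmul a b
  | add x y hx hy => rw [W.starT_add, hx, hy, star_add]

lemma star_Δ_one : star (W.Δ 1) = W.Δ 1 := by
  rw [← W.starT_eq_star, ← W.Δ_star, star_one]

lemma rid_map_ε_tmul_one_mul (a : A) (t : A ⊗[ℂ] A) :
    TensorProduct.rid ℂ A (map LinearMap.id W.ε ((a ⊗ₜ (1 : A)) * t)) =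
      a * TensorProduct.rid ℂ A (map LinearMap.id W.ε t) := by
  induction t using TensorProduct.induction_on with
  | zero => simp
  | tmul x y => simp
  | add x y hx hy => simp only [mul_add, map_add, hx, hy]

lemma lid_map_εκ_Δ_one : TensorProduct.lid ℂ A (map (W.ε ∘ₗ W.κ) LinearMap.id (W.Δ 1)) = 1 := by
  have hnat : ∀ t : A ⊗[ℂ] A, W.κ (TensorProduct.lid ℂ A (map (W.ε ∘ₗ W.κ) LinearMap.id t)) =
      TensorProduct.rid ℂ A (map LinearMap.id W.ε (TensorProduct.comm ℂ A A (map W.κ W.κ t))) := by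
    intro t
    induction t using TensorProduct.induction_on with
    | zero => simp
    | tmul x y => simp
    | add x y hx hy => simp only [map_add, hx, hy]
  apply W.κ_injective
  rw [hnat, W.κ_flip]
  simpa using W.ε_counit_r (W.κ 1)

lemma mul'_map_κ_Δ_one
    (h : W.Δ 1 ∈ Submodule.span ℂ {t | ∃ x, ∃ y ∈ W.tgt, t = x ⊗ₜ[ℂ] y}) :
    LinearMap.mul' ℂ A (map W.κ LinearMap.id (W.Δ 1)) = 1 := by
  set S := (LinearMap.mul' ℂ A).comp (map W.κ LinearMap.id)
  -- For `y ∈ A_t`, `(id ⊗ Δ)(x ⊗ y) = x ⊗ (y ⊗ 1)Δ(1)`: this turns the antipode axiom at `1`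
  -- into `(S Δ(1) ⊗ 1) Δ(1) = Δ(1)`, and `id ⊗ ε` then gives `S Δ(1) = 1`.
  have hleg : ∀ (x y : A) (u : A ⊗[ℂ] A),
      map S LinearMap.id ((TensorProduct.assoc ℂ A A A).symm (x ⊗ₜ ((y ⊗ₜ 1) * u))) =
        (S (x ⊗ₜ y) ⊗ₜ 1) * u := by
    intro x y u
    induction u using TensorProduct.induction_on with
    | zero => simp
    | tmul a b => simp [S, mul_assoc]
    | add u v hu hv => simp only [mul_add, tmul_add, map_add, hu, hv]
  have hspan : ∀ t ∈ Submodule.span ℂ {t | ∃ x, ∃ y ∈ W.tgt, t = x ⊗ₜ[ℂ] y},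
      map S LinearMap.id ((TensorProduct.assoc ℂ A A A).symm (map LinearMap.id W.Δ t)) =
        (S t ⊗ₜ 1) * W.Δ 1 := by
    intro t ht
    induction ht using Submodule.span_induction with
    | mem t ht =>
      obtain ⟨x, y, hy, rfl⟩ := ht
      rw [map_tmul, LinearMap.id_apply, hy.2, hleg]
    | zero => simp
    | add u v _ _ hu hv => simp only [map_add, hu, hv, add_tmul, add_mul]
    | smul c u _ hu => rw [map_smul, map_smul, map_smul, hu, map_smul, ← smul_tmul', smul_mul_assoc]
  have hcoassoc : map W.Δ LinearMap.id (W.Δ 1) =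
      (TensorProduct.assoc ℂ A A A).symm (map LinearMap.id W.Δ (W.Δ 1)) := by
    rw [← W.coassoc 1, LinearEquiv.symm_apply_apply]
  have hmul : (S (W.Δ 1) ⊗ₜ 1) * W.Δ 1 = W.Δ 1 := by
    rw [← hspan _ h, ← hcoassoc, W.antipode 1, ← Algebra.TensorProduct.one_def, one_mul]
  simpa [S, W.rid_map_ε_tmul_one_mul, W.ε_counit_r] using
    congrArg (fun t => TensorProduct.rid ℂ A (map LinearMap.id W.ε t)) hmul

lemma n_cast_ne_zero (W : WeakHopfCStar A Γ n) (γ : Γ) : (n γ : ℂ) ≠ 0 :=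
  Nat.cast_ne_zero.mpr (Nat.one_le_iff_ne_zero.mp (W.n_pos γ))

noncomputable def ofBlocks (g : (γ : Γ) → Matrix (Fin (n γ)) (Fin (n γ)) ℂ) : A :=
  ∑ γ, ∑ i, ∑ j, g γ i j • W.e γ i j

/- The axioms allow a whole block `e γ` to vanish, so coefficients of `ofBlocks` are only
determined where `e γ i j ≠ 0`. -/
lemma e_ne_zero_of_ne_zero {γ : Γ} {i j : Fin (n γ)} (h : W.e γ i j ≠ 0) (k l : Fin (n γ)) :
    W.e γ k l ≠ 0 := by
  have hfactor : W.e γ i j = W.e γ i k * W.e γ k l * W.e γ l j := by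
    simp [W.e_mul_same]
  intro hkl
  exact h (by rw [hfactor, hkl, mul_zero, zero_mul])

lemma e_mul_ofBlocks (g : (γ : Γ) → Matrix (Fin (n γ)) (Fin (n γ)) ℂ) (γ : Γ)
    (a b : Fin (n γ)) : W.e γ a b * W.ofBlocks g = ∑ l, g γ b l • W.e γ a l := by
  simp only [ofBlocks, Finset.mul_sum, mul_smul_comm]
  rw [Finset.sum_eq_single γ]
  · simp [W.e_mul_same]
  · intro δ _ hδ
    simp [W.e_mul_ne γ δ (Ne.symm hδ)]
  · simp

lemma e_mul_ofBlocks_mul_e (g : (γ : Γ) → Matrix (Fin (n γ)) (Fin (n γ)) ℂ) (γ : Γ)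
    (a b c d : Fin (n γ)) : W.e γ a b * W.ofBlocks g * W.e γ c d = g γ b c • W.e γ a d := by
  simp [W.e_mul_ofBlocks, Finset.sum_mul, W.e_mul_same]

lemma ofBlocks_mul_ofBlocks (f g : (γ : Γ) → Matrix (Fin (n γ)) (Fin (n γ)) ℂ) :
    W.ofBlocks f * W.ofBlocks g = W.ofBlocks (fun γ => f γ * g γ) := by
  change (∑ γ, ∑ i, ∑ j, f γ i j • W.e γ i j) * W.ofBlocks g = _
  simp only [Finset.sum_mul, smul_mul_assoc, W.e_mul_ofBlocks, Finset.smul_sum, smul_smul]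
  simp only [ofBlocks, Matrix.mul_apply, Finset.sum_smul]
  exact Finset.sum_congr rfl fun γ _ => Finset.sum_congr rfl fun i _ => Finset.sum_comm

lemma star_ofBlocks (g : (γ : Γ) → Matrix (Fin (n γ)) (Fin (n γ)) ℂ) :
    star (W.ofBlocks g) = W.ofBlocks (fun γ => star (g γ)) := by
  simp only [ofBlocks, star_sum, star_smul, W.e_star, Matrix.star_apply]
  exact Finset.sum_congr rfl fun γ _ => Finset.sum_comm

lemma ofBlocks_one : W.ofBlocks 1 = 1 := by
  simp [ofBlocks, Matrix.one_apply, ite_smul, W.e_sum]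

lemma ofBlocks_congr {f g : (γ : Γ) → Matrix (Fin (n γ)) (Fin (n γ)) ℂ}
    (h : ∀ γ i j, W.e γ i j ≠ 0 → f γ i j = g γ i j) : W.ofBlocks f = W.ofBlocks g := by
  refine Finset.sum_congr rfl fun γ _ => Finset.sum_congr rfl fun i _ =>
    Finset.sum_congr rfl fun j _ => ?_
  by_cases he : W.e γ i j = 0
  · simp [he]
  · rw [h γ i j he]

lemma apply_eq_of_ofBlocks_eq {f g : (γ : Γ) → Matrix (Fin (n γ)) (Fin (n γ)) ℂ}
    (h : W.ofBlocks f = W.ofBlocks g) {γ : Γ} {i j : Fin (n γ)} (he : W.e γ i j ≠ 0) :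
    f γ i j = g γ i j := by
  have hsandwich := congrArg (fun x => W.e γ i i * x * W.e γ j j) h
  simp only [W.e_mul_ofBlocks_mul_e] at hsandwich
  exact smul_left_injective ℂ he hsandwich

lemma exists_ofBlocks_eq_of_mem_tgt {x : A} (hx : x ∈ W.tgt) :
    ∃ g : (γ : Γ) → Matrix (Fin (n γ)) (Fin (n γ)) ℂ, x = W.ofBlocks g := by
  obtain ⟨c, hc⟩ := (Submodule.mem_span_range_iff_exists_fun ℂ).mp (W.e_span x hx)
  refine ⟨fun γ i j => c ⟨γ, (i, j)⟩, ?_⟩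
  rw [← hc, Fintype.sum_sigma]
  exact Finset.sum_congr rfl fun γ _ => Fintype.sum_prod_type _

noncomputable def counitMatrix (γ : Γ) : Matrix (Fin (n γ)) (Fin (n γ)) ℂ :=
  Matrix.of fun i j => W.ε (W.e γ j i)

lemma counitMatrix_posSemidef (γ : Γ) : (W.counitMatrix γ).PosSemidef := by
  refine Matrix.PosSemidef.of_dotProduct_mulVec_nonneg (Matrix.IsHermitian.ext fun i j => ?_)
    fun x => ?_
  · rw [counitMatrix, Matrix.of_apply, Matrix.of_apply, Complex.star_def, ← W.ε_star, W.e_star]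
  · set w : A := ∑ b, star (x b) • W.e γ ⟨0, W.n_pos γ⟩ b
    have hww : star w * w = ∑ a, ∑ b, (x a * star (x b)) • W.e γ a b := by
      simp only [w, star_sum, star_smul, star_star, W.e_star, Finset.sum_mul, Finset.mul_sum,
        smul_mul_smul_comm, W.e_mul_same, if_true]
      exact Finset.sum_comm
    have hquad : star x ⬝ᵥ W.counitMatrix γ *ᵥ x = W.ε (star w * w) := by
      simp only [hww, map_sum, map_smul, dotProduct, Matrix.mulVec, counitMatrix, Matrix.of_apply,
        Finset.mul_sum, Pi.star_apply, smul_eq_mul]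
      rw [Finset.sum_comm]
      exact Finset.sum_congr rfl fun a _ => Finset.sum_congr rfl fun b _ => by ring
    exact hquad ▸ W.ε_pos w

section

variable {q : A}

lemma Δ_one_mem_span (hqf : W.qFormula q) :
    W.Δ 1 ∈ Submodule.span ℂ {t | ∃ x, ∃ y ∈ W.tgt, t = x ⊗ₜ[ℂ] y} := by
  rw [hqf]
  exact Submodule.sum_mem _ fun γ _ => Submodule.sum_mem _ fun i _ =>
    Submodule.sum_mem _ fun j _ =>
      Submodule.smul_mem _ _ (Submodule.subset_span ⟨_, _, W.e_target γ j i, rfl⟩)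

lemma EZt_eq_one (hqf : W.qFormula q) : W.EZt q = 1 := by
  rw [← W.mul'_map_κ_Δ_one (W.Δ_one_mem_span hqf), hqf]
  simp [EZt, W.κ_κinv, mul_assoc]

lemma lid_map_Δ_one_eq_ofBlocks (hqf : W.qFormula q) (φ : A →ₗ[ℂ] ℂ) :
    TensorProduct.lid ℂ A (map φ LinearMap.id (W.Δ 1)) =
      W.ofBlocks fun γ => Matrix.of fun i j => (n γ : ℂ)⁻¹ * φ (W.κinv (W.e γ j i * q)) := by
  rw [hqf]
  simp only [map_sum, map_smul, map_tmul, LinearMap.id_apply, lid_tmul, smul_smul, ofBlocks,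
    Matrix.of_apply]
  exact Finset.sum_congr rfl fun γ _ => Finset.sum_comm

lemma mul_counitMatrix_eq_smul_one (hqf : W.qFormula q)
    {Q : (γ : Γ) → Matrix (Fin (n γ)) (Fin (n γ)) ℂ}
    (hQ : q = W.ofBlocks Q) {γ : Γ} (hγ : ∀ i j, W.e γ i j ≠ 0) :
    Q γ * W.counitMatrix γ = (n γ : ℂ) • 1 := by
  have hΔ := (W.lid_map_Δ_one_eq_ofBlocks hqf (W.ε ∘ₗ W.κ)).symm.trans
    (W.lid_map_εκ_Δ_one.trans W.ofBlocks_one.symm)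
  ext i j
  have hij : (n γ : ℂ)⁻¹ * W.ε (W.e γ j i * q) = (1 : Matrix _ _ ℂ) i j := by
    simpa [W.κ_κinv] using W.apply_eq_of_ofBlocks_eq hΔ (hγ i j)
  rw [Matrix.smul_apply, ← hij, smul_eq_mul, mul_inv_cancel_left₀ (W.n_cast_ne_zero γ)]
  conv_rhs => rw [hQ, W.e_mul_ofBlocks]
  simp [Matrix.mul_apply, counitMatrix]

lemma exists_eq_star_mul_self (hqf : W.qFormula q)
    {Q : (γ : Γ) → Matrix (Fin (n γ)) (Fin (n γ)) ℂ} (hQ : q = W.ofBlocks Q) :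
    ∃ b : A, q = star b * b := by
  have hblock : ∀ γ, ∃ B : Matrix (Fin (n γ)) (Fin (n γ)) ℂ,
      (∀ i j, W.e γ i j ≠ 0) → Q γ = star B * B := by
    intro γ
    by_cases hγ : ∀ i j, W.e γ i j ≠ 0
    · have hpos := (W.counitMatrix_posSemidef γ).of_mul_eq_smul_one
        (Nat.cast_pos.mpr (W.n_pos γ)) (W.mul_counitMatrix_eq_smul_one hqf hQ hγ)
      open scoped MatrixOrder Matrix.Norms.L2Operator in
      obtain ⟨B, hB⟩ := CStarAlgebra.nonneg_iff_eq_star_mul_self.mp hpos.nonneg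
      exact ⟨B, fun _ => hB⟩
    · exact ⟨0, fun h => absurd h hγ⟩
  choose B hB using hblock
  refine ⟨W.ofBlocks B, ?_⟩
  rw [W.star_ofBlocks, W.ofBlocks_mul_ofBlocks, hQ]
  exact W.ofBlocks_congr fun γ i j he => by rw [hB γ (W.e_ne_zero_of_ne_zero he)]

lemma star_κinv_e_diag_mul (hqf : W.qFormula q) (γ : Γ) (i : Fin (n γ)) :
    star (W.κinv (W.e γ i i * q)) = W.κinv (W.e γ i i * q) := by
  by_cases he : W.e γ i i = 0
  · simp [he, κinv]
  have hstar : ∀ φ : A →ₗ[ℂ] ℂ, TensorProduct.lid ℂ A (map φ LinearMap.id (W.Δ 1)) =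
      W.ofBlocks fun γ => Matrix.of fun i j => (n γ : ℂ)⁻¹ * φ (star (W.κinv (W.e γ i j * q))) := by
    intro φ
    conv_lhs => rw [← W.star_Δ_one, hqf]
    simp [star_sum, smul_smul, ofBlocks, W.e_star]
  rw [← sub_eq_zero, ← Module.forall_dual_apply_eq_zero_iff ℂ]
  intro φ
  have hcoeff :=
    W.apply_eq_of_ofBlocks_eq ((hstar φ).symm.trans (W.lid_map_Δ_one_eq_ofBlocks hqf φ)) he
  simpa [W.n_cast_ne_zero γ, sub_eq_zero] using hcoeff

lemma κ_κ_eq_self (hqf : W.qFormula q) (hq : star q = q) : W.κ (W.κ q) = q := by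
  have hdiag : ∀ γ i, W.κ (W.κ (q * W.e γ i i)) = W.e γ i i * q := by
    intro γ i
    have h := W.star_κinv_e_diag_mul hqf γ i
    rw [W.star_κinv, star_mul, W.e_star, hq] at h
    rw [h, W.κ_κinv]
  calc W.κ (W.κ q) = W.κ (W.κ (q * ∑ γ, ∑ i, W.e γ i i)) := by rw [W.e_sum, mul_one]
    _ = ∑ γ, ∑ i, W.e γ i i * q := by simp only [Finset.mul_sum, map_sum, hdiag]
    _ = q := by simp only [← Finset.sum_mul, W.e_sum, one_mul]

end

end WeakHopfCStar

theorem WeakHopfCStar.q_properties_general {A Γ : Type*} [Fintype Γ] [DecidableEq Γ]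
    [NormedRing A] [StarRing A] [CStarRing A] [NormedAlgebra ℂ A] [StarModule ℂ A]
    [FiniteDimensional ℂ A] {n : Γ → ℕ} (W : WeakHopfCStar A Γ n)
    (q : A) (hqt : q ∈ W.tgt) (hqf : W.qFormula q) :
    W.κ (W.κ q) = q ∧ W.EZt q = 1 ∧ ∃ b : A, q = star b * b := by
  obtain ⟨Q, hQ⟩ := W.exists_ofBlocks_eq_of_mem_tgt hqt
  obtain ⟨b, hb⟩ := W.exists_eq_star_mul_self hqf hQ
  have hsa : star q = q := by rw [hb, star_mul, star_star]
  exact ⟨W.κ_κ_eq_self hqf hsa, W.EZt_eq_one hqf, b, hb⟩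

/-- The canonical element `q` satisfies `κ²(q) = q`, `E_{Z(A_t)}(q) = 1`, and `q` is a
positive element of `A`. -/
theorem WeakHopfCStar.q_properties {A Γ : Type*} [Fintype Γ] [DecidableEq Γ]
    [NormedRing A] [StarRing A] [CStarRing A] [NormedAlgebra ℂ A] [StarModule ℂ A]
    [FiniteDimensional ℂ A] {n : Γ → ℕ} (W : WeakHopfCStar A Γ n)
    (q : A) (hqt : q ∈ W.tgt) (hqu : IsUnit q) (hqf : W.qFormula q) :
    W.κ (W.κ q) = q ∧ W.EZt q = 1 ∧ ∃ b : A, q = star b * b :=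
  WeakHopfCStar.q_properties_general W q hqt hqf
end
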